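/- If (α_n, β_n) is a Bailey pair relative to a (in base q), then (ᾱ_n, β̄_n) defined by ᾱ_n = (1+a q^{2n})/((1+a) q^n) · α_n and β̄_n = q^{-n}/(-a;q)_{2n} · \sum_{k=0}^{n} (-1)^{n-k} q^{(n-k)^2-(n-k)} / (q^2;q^2)_{n-k} · β_k is a Bailey pair relative to a^2 in base q^2; that is, β̄_n = \sum_{i=0}^{n} ᾱ_i / ((q^2;q^2)_{n-i} (a^2 q^2; q^2)_{n+i}). -/

import Mathlib

/-!
Both sides are linear in `α`, so it suffices to treat `α` concentrated at one index `i`, where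
`βₙ = 1/((q;q)_{n-i} (aq;q)_{n+i})`. Splitting `(aq;q)_{2i+l} = (aq;q)_{2i} (bq;q)_l` with
`b = a q^{2i}` reduces this to the terminating summation
```
∑_{j ≤ m} (-1)^j q^{j²-j} / ((q²;q²)_j (q;q)_{m-j} (bq;q)_{m-j})
  = qᵐ (-b;q)_{2m} / ((q²;q²)ₘ (b²q²;q²)ₘ),
```
i.e. the base change of the unit Bailey pair relative to `b`. Going from `m` to `m + 1` multiplies
the right side by an explicit rational factor, and creative telescoping with an explicit
certificate shows that the left side is multiplied by the same factor.
-/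

open Finset

lemma sum_range_succ_eq_mul_of_telescoping {R : Type*} [CommRing R] {f g h : ℕ → R} {r : R}
    {m : ℕ} (hstep : ∀ j ≤ m, f j = r * g j + (h (j + 1) - h j)) (hlast : f (m + 1) = -h (m + 1))
    (h0 : h 0 = 0) :
    ∑ j ∈ range (m + 2), f j = r * ∑ j ∈ range (m + 1), g j := by
  rw [sum_range_succ, sum_congr rfl fun j hj => hstep j (Nat.lt_succ_iff.1 (mem_range.1 hj)),
    sum_add_distrib, ← mul_sum, sum_range_sub, h0, hlast]
  ring

lemma sum_range_sum_range_succ_comm {M : Type*} [AddCommMonoid M] (n : ℕ) (f : ℕ → ℕ → M) :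
    ∑ k ∈ range n, ∑ i ∈ range (k + 1), f k i =
      ∑ i ∈ range n, ∑ l ∈ range (n - i), f (i + l) i := by
  rw [← sum_range_diag_flip]
  refine sum_congr rfl fun k _ => sum_congr rfl fun i hi => ?_
  rw [Nat.add_sub_cancel' (Nat.lt_succ_iff.1 (mem_range.1 hi))]

section

variable {K : Type*} [Field K]

def qPochhammer (c q : K) (n : ℕ) : K := ∏ k ∈ range n, (1 - c * q ^ k)

@[simp] lemma qPochhammer_zero (c q : K) : qPochhammer c q 0 = 1 := rfl

lemma qPochhammer_succ (c q : K) (n : ℕ) :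
    qPochhammer c q (n + 1) = qPochhammer c q n * (1 - c * q ^ n) :=
  prod_range_succ _ _

lemma qPochhammer_succ' (c q : K) (n : ℕ) :
    qPochhammer c q (n + 1) = (1 - c) * qPochhammer (c * q) q n := by
  simp only [qPochhammer, prod_range_succ', pow_zero, mul_one, mul_comm (1 - c)]
  congr 1
  exact prod_congr rfl fun k _ => by ring

lemma qPochhammer_add (c q : K) (s t : ℕ) :
    qPochhammer c q (s + t) = qPochhammer c q s * qPochhammer (c * q ^ s) q t := by
  simp only [qPochhammer, prod_range_add]
  congr 1
  exact prod_congr rfl fun k _ => by ring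

lemma qPochhammer_sq (c q : K) (n : ℕ) :
    qPochhammer (c ^ 2) (q ^ 2) n = qPochhammer c q n * qPochhammer (-c) q n := by
  simp only [qPochhammer, ← prod_mul_distrib]
  exact prod_congr rfl fun k _ => by ring

lemma qPochhammer_ne_zero {c q : K} {n : ℕ} (h : ∀ k < n, c * q ^ k ≠ 1) :
    qPochhammer c q n ≠ 0 :=
  prod_ne_zero_iff.2 fun k hk => sub_ne_zero.2 (h k (mem_range.1 hk)).symm

/-- The rational certificate of creative telescoping for `baseChangeTerm`, as produced by
Zeilberger's algorithm (see `baseChangeTerm_telescoping`). -/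
def wzCertificate (q b Q X : K) : K :=
  (X ^ 2 - 1) *
      (((1 - q) * X + q ^ 2 * (1 + b) * Q) * X - b * q ^ 3 * Q ^ 2 * (1 + b * q * Q ^ 2)) /
    (X ^ 2 * ((1 - q ^ 2 * Q ^ 2) * (1 - b ^ 2 * q ^ 2 * Q ^ 2)))

def closedFormRatio (q b Q : K) : K :=
  q * (1 + b * Q ^ 2) * (1 + b * q * Q ^ 2) / ((1 - q ^ 2 * Q ^ 2) * (1 - b ^ 2 * q ^ 2 * Q ^ 2))

lemma wzCertificate_identity {q b X T : K} (hq : q ≠ 0) (hX : X ≠ 0)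
    (hT₁ : 1 - q * T ≠ 0) (hT₂ : 1 - b * q * T ≠ 0) (hX₁ : 1 - q ^ 2 * X ^ 2 ≠ 0)
    (hQ₁ : 1 - q ^ 2 * (X * T) ^ 2 ≠ 0) (hQ₂ : 1 - b ^ 2 * q ^ 2 * (X * T) ^ 2 ≠ 0) :
    (1 + wzCertificate q b (X * T) X) / ((1 - q * T) * (1 - b * q * T)) =
      closedFormRatio q b (X * T) +
        wzCertificate q b (X * T) (q * X) * -X ^ 2 / (1 - q ^ 2 * X ^ 2) := by
  have hD := mul_ne_zero hQ₁ hQ₂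
  unfold wzCertificate closedFormRatio
  rw [one_add_div (by positivity), div_div, div_mul_eq_mul_div, div_div,
    div_add_div _ _ hD (by positivity), div_eq_div_iff (by positivity) (by positivity)]
  ring

lemma wzCertificate_self {q b Q : K} (hq : q ≠ 0) (hQ : Q ≠ 0)
    (hQ₁ : 1 - q ^ 2 * Q ^ 2 ≠ 0) (hQ₂ : 1 - b ^ 2 * q ^ 2 * Q ^ 2 ≠ 0) :
    wzCertificate q b Q (q * Q) = -1 := by
  unfold wzCertificate
  rw [div_eq_iff (by positivity)]
  ring

lemma wzCertificate_one (q b Q : K) : wzCertificate q b Q 1 = 0 := by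
  simp [wzCertificate]

lemma one_sub_sq_ne_zero {x : K} (h₁ : x ≠ 1) (h₂ : x ≠ -1) : 1 - x ^ 2 ≠ 0 :=
  sub_ne_zero.2 fun h => (sq_eq_one_iff.1 h.symm).elim h₁ h₂

def baseChangeTerm (q b : K) (m j : ℕ) : K :=
  (-1) ^ j * q ^ (j ^ 2 - j) /
    (qPochhammer (q ^ 2) (q ^ 2) j * qPochhammer q q (m - j) * qPochhammer (b * q) q (m - j))

lemma baseChangeTerm_succ_left (q b : K) {m j : ℕ} (hj : j ≤ m) :
    baseChangeTerm q b (m + 1) j =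
      baseChangeTerm q b m j / ((1 - q * q ^ (m - j)) * (1 - b * q * q ^ (m - j))) := by
  rw [baseChangeTerm, baseChangeTerm, Nat.sub_add_comm hj, qPochhammer_succ, qPochhammer_succ,
    div_div]
  ring

lemma baseChangeTerm_succ_succ (q b : K) (m j : ℕ) :
    baseChangeTerm q b (m + 1) (j + 1) =
      baseChangeTerm q b m j * -(q ^ j) ^ 2 / (1 - q ^ 2 * (q ^ j) ^ 2) := by
  have hexp : (j + 1) ^ 2 - (j + 1) = j ^ 2 - j + 2 * j := by
    have := Nat.le_self_pow two_ne_zero j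
    ring_nf; omega
  rw [baseChangeTerm, baseChangeTerm, Nat.add_sub_add_right, qPochhammer_succ, hexp,
    div_mul_eq_mul_div, div_div]
  congr 1 <;> ring

section Telescoping

variable {q b : K}

lemma one_sub_sq_mul_pow_sq_ne_zero (hq₁ : ∀ k, q ^ (k + 1) ≠ 1) (m : ℕ) :
    1 - q ^ 2 * (q ^ m) ^ 2 ≠ 0 := by
  rw [← mul_pow, ← pow_succ', ← pow_mul]
  exact sub_ne_zero.2 (hq₁ _).symm

lemma one_sub_sq_mul_sq_mul_pow_sq_ne_zero (hb₁ : ∀ k, b * q ^ (k + 1) ≠ 1)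
    (hb₂ : ∀ k, b * q ^ (k + 1) ≠ -1) (m : ℕ) : 1 - b ^ 2 * q ^ 2 * (q ^ m) ^ 2 ≠ 0 := by
  rw [← mul_pow, ← mul_pow, mul_assoc, ← pow_succ']
  exact one_sub_sq_ne_zero (hb₁ m) (hb₂ m)

lemma qPochhammer_sq_sq_ne_zero (hq₁ : ∀ k, q ^ (k + 1) ≠ 1) (m : ℕ) :
    qPochhammer (q ^ 2) (q ^ 2) m ≠ 0 :=
  qPochhammer_ne_zero fun k _ h => hq₁ (2 * k + 1) (by linear_combination h)

lemma qPochhammer_sq_mul_sq_ne_zero (hb₁ : ∀ k, b * q ^ (k + 1) ≠ 1)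
    (hb₂ : ∀ k, b * q ^ (k + 1) ≠ -1) (m : ℕ) : qPochhammer (b ^ 2 * q ^ 2) (q ^ 2) m ≠ 0 :=
  qPochhammer_ne_zero fun k _ h => one_sub_sq_ne_zero (hb₁ k) (hb₂ k) (by linear_combination -h)

lemma baseChangeTerm_telescoping (hq : q ≠ 0) (hq₁ : ∀ k, q ^ (k + 1) ≠ 1)
    (hb₁ : ∀ k, b * q ^ (k + 1) ≠ 1) (hb₂ : ∀ k, b * q ^ (k + 1) ≠ -1) {m j : ℕ} (hj : j ≤ m) :
    baseChangeTerm q b (m + 1) j =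
      closedFormRatio q b (q ^ m) * baseChangeTerm q b m j +
        (wzCertificate q b (q ^ m) (q ^ (j + 1)) * baseChangeTerm q b (m + 1) (j + 1) -
          wzCertificate q b (q ^ m) (q ^ j) * baseChangeTerm q b (m + 1) j) := by
  obtain ⟨l, rfl⟩ := Nat.exists_eq_add_of_le hj
  rw [baseChangeTerm_succ_left q b hj, baseChangeTerm_succ_succ, Nat.add_sub_cancel_left,
    pow_succ', pow_add]
  have key := wzCertificate_identity (b := b) hq (pow_ne_zero j hq) (T := q ^ l)
    (sub_ne_zero.2 (by rw [← pow_succ']; exact (hq₁ l).symm))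
    (sub_ne_zero.2 (by rw [mul_assoc, ← pow_succ']; exact (hb₁ l).symm))
    (one_sub_sq_mul_pow_sq_ne_zero hq₁ j)
    (by rw [← pow_add]; exact one_sub_sq_mul_pow_sq_ne_zero hq₁ _)
    (by rw [← pow_add]; exact one_sub_sq_mul_sq_mul_pow_sq_ne_zero hb₁ hb₂ _)
  linear_combination baseChangeTerm q b (j + l) j * key

lemma sum_baseChangeTerm_succ (hq : q ≠ 0) (hq₁ : ∀ k, q ^ (k + 1) ≠ 1)
    (hb₁ : ∀ k, b * q ^ (k + 1) ≠ 1) (hb₂ : ∀ k, b * q ^ (k + 1) ≠ -1) (m : ℕ) :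
    ∑ j ∈ range (m + 2), baseChangeTerm q b (m + 1) j =
      closedFormRatio q b (q ^ m) * ∑ j ∈ range (m + 1), baseChangeTerm q b m j := by
  refine sum_range_succ_eq_mul_of_telescoping
    (h := fun j => wzCertificate q b (q ^ m) (q ^ j) * baseChangeTerm q b (m + 1) j)
    (fun j hj => baseChangeTerm_telescoping hq hq₁ hb₁ hb₂ hj) ?_ (by simp [wzCertificate_one])
  rw [pow_succ', wzCertificate_self hq (pow_ne_zero m hq) (one_sub_sq_mul_pow_sq_ne_zero hq₁ m)
    (one_sub_sq_mul_sq_mul_pow_sq_ne_zero hb₁ hb₂ m)]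
  ring

lemma sum_baseChangeTerm (hq : q ≠ 0) (hq₁ : ∀ k, q ^ (k + 1) ≠ 1)
    (hb₁ : ∀ k, b * q ^ (k + 1) ≠ 1) (hb₂ : ∀ k, b * q ^ (k + 1) ≠ -1) (m : ℕ) :
    ∑ j ∈ range (m + 1), baseChangeTerm q b m j =
      q ^ m * qPochhammer (-b) q (2 * m) /
        (qPochhammer (q ^ 2) (q ^ 2) m * qPochhammer (b ^ 2 * q ^ 2) (q ^ 2) m) := by
  induction m with
  | zero => simp [baseChangeTerm]
  | succ m ih =>
    have hP₁ := qPochhammer_sq_sq_ne_zero hq₁ m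
    have hP₂ := qPochhammer_sq_mul_sq_ne_zero hb₁ hb₂ m
    have hQ₁ := one_sub_sq_mul_pow_sq_ne_zero hq₁ m
    have hQ₂ := one_sub_sq_mul_sq_mul_pow_sq_ne_zero hb₁ hb₂ m
    rw [sum_baseChangeTerm_succ hq hq₁ hb₁ hb₂, ih, closedFormRatio, Nat.mul_succ,
      qPochhammer_succ, qPochhammer_succ, qPochhammer_succ (q ^ 2),
      qPochhammer_succ (b ^ 2 * q ^ 2),
      div_mul_div_comm, div_eq_div_iff (by positivity) (mul_ne_zero (mul_ne_zero hP₁ ?_)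
        (mul_ne_zero hP₂ ?_))]
    · ring
    · convert hQ₁ using 2; ring
    · convert hQ₂ using 2; ring

end Telescoping

section BaseChange

variable {q a : K}

lemma base_change_single (hq : q ≠ 0) (hq₁ : ∀ k, q ^ (k + 1) ≠ 1)
    (ha₁ : ∀ k, a * q ^ k ≠ 1) (ha₂ : ∀ k, a * q ^ k ≠ -1) (i m : ℕ) :
    (q ^ (i + m))⁻¹ / qPochhammer (-a) q (2 * (i + m)) *
        ∑ l ∈ range (m + 1), (-1) ^ (m - l) * q ^ ((m - l) ^ 2 - (m - l)) /
          qPochhammer (q ^ 2) (q ^ 2) (m - l) /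
            (qPochhammer q q l * qPochhammer (a * q) q (2 * i + l))
      = (1 + a * q ^ (2 * i)) / ((1 + a) * q ^ i) /
          (qPochhammer (q ^ 2) (q ^ 2) m * qPochhammer (a ^ 2 * q ^ 2) (q ^ 2) (2 * i + m)) := by
  set b := a * q ^ (2 * i) with hb
  have hb₁ : ∀ k, b * q ^ (k + 1) ≠ 1 := fun k => by
    rw [hb, mul_assoc, ← pow_add]; exact ha₁ _
  have hb₂ : ∀ k, b * q ^ (k + 1) ≠ -1 := fun k => by
    rw [hb, mul_assoc, ← pow_add]; exact ha₂ _
  have hsum : ∑ l ∈ range (m + 1), (-1) ^ (m - l) * q ^ ((m - l) ^ 2 - (m - l)) /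
        qPochhammer (q ^ 2) (q ^ 2) (m - l) /
          (qPochhammer q q l * qPochhammer (a * q) q (2 * i + l))
      = (∑ j ∈ range (m + 1), baseChangeTerm q b m j) / qPochhammer (a * q) q (2 * i) := by
    rw [sum_div, ← sum_range_reflect]
    refine sum_congr rfl fun j hj => ?_
    rw [Nat.add_sub_cancel, Nat.sub_sub_self (Nat.lt_succ_iff.1 (mem_range.1 hj)),
      qPochhammer_add, baseChangeTerm, show a * q * q ^ (2 * i) = b * q by ring]
    ring
  have hNA : qPochhammer (-a) q (2 * i) ≠ 0 :=
    qPochhammer_ne_zero fun k _ h => ha₂ k (by linear_combination -h)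
  have hNB : qPochhammer (-b) q (2 * m) ≠ 0 :=
    qPochhammer_ne_zero fun k _ h => ha₂ (2 * i + k) (by linear_combination -h)
  have hNQ : qPochhammer (-(a * q)) q (2 * i) ≠ 0 :=
    qPochhammer_ne_zero fun k _ h => ha₂ (k + 1) (by linear_combination -h)
  have hAP : qPochhammer (a * q) q (2 * i) ≠ 0 :=
    qPochhammer_ne_zero fun k _ h => ha₁ (k + 1) (by linear_combination h)
  have hP₁ := qPochhammer_sq_sq_ne_zero hq₁ m
  have hP₂ := qPochhammer_sq_mul_sq_ne_zero hb₁ hb₂ m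
  have ha : 1 + a ≠ 0 := fun h => ha₂ 0 (by linear_combination h)
  have hrel :
      (1 + a) * qPochhammer (-(a * q)) q (2 * i) = qPochhammer (-a) q (2 * i) * (1 + b) := by
    rw [← neg_mul, ← sub_neg_eq_add, ← qPochhammer_succ', qPochhammer_succ, hb]
    ring
  have hNsplit : qPochhammer (-a) q (2 * (i + m)) =
      qPochhammer (-a) q (2 * i) * qPochhammer (-b) q (2 * m) := by
    rw [mul_add, qPochhammer_add, hb, neg_mul]
  have hPsplit : qPochhammer (a ^ 2 * q ^ 2) (q ^ 2) (2 * i + m) = qPochhammer (a * q) q (2 * i) *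
      qPochhammer (-(a * q)) q (2 * i) * qPochhammer (b ^ 2 * q ^ 2) (q ^ 2) m := by
    rw [qPochhammer_add, show a ^ 2 * q ^ 2 = (a * q) ^ 2 by ring, qPochhammer_sq (a * q),
      show (a * q) ^ 2 * (q ^ 2) ^ (2 * i) = b ^ 2 * q ^ 2 by ring]
  rw [hsum, sum_baseChangeTerm hq hq₁ hb₁ hb₂, hNsplit, hPsplit]
  field_simp
  linear_combination q ^ m * q ^ i * hrel

end BaseChange

end

/-- The base-change lemma ((2.5)–(2.6)): if `(αₙ, βₙ)` is a Bailey pair relative to `a` in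
base `q`, then `ᾱₙ = (1+a q^{2n})/((1+a) qⁿ) · αₙ` and
`β̄ₙ = q^{-n}/(-a;q)_{2n} · ∑_{k=0}^n (-1)^{n-k} q^{(n-k)²-(n-k)}/(q²;q²)_{n-k} · βₖ`
form a Bailey pair relative to `a²` in base `q²`. -/
theorem base_change (K : Type*) [Field K] (q a : K) (hq0 : q ≠ 0)
    (hq1 : ∀ k : ℕ, 1 ≤ k → q ^ k ≠ 1)
    (ha1 : ∀ k : ℕ, a * q ^ k ≠ 1) (ha2 : ∀ k : ℕ, a * q ^ k ≠ -1)
    (α β : ℕ → K)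
    (hpair : ∀ n : ℕ, β n = ∑ i ∈ range (n + 1),
      α i / ((∏ k ∈ range (n - i), (1 - q ^ (k + 1))) *
        (∏ k ∈ range (n + i), (1 - a * q ^ (k + 1))))) :
    ∀ n : ℕ,
      (q ^ n)⁻¹ / (∏ k ∈ range (2 * n), (1 + a * q ^ k)) *
          ∑ k ∈ range (n + 1),
            (-1 : K) ^ (n - k) * q ^ ((n - k) ^ 2 - (n - k)) /
              (∏ m ∈ range (n - k), (1 - q ^ (2 * m + 2))) * β k
        = ∑ i ∈ range (n + 1),
            ((1 + a * q ^ (2 * i)) / ((1 + a) * q ^ i) * α i) /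
              ((∏ k ∈ range (n - i), (1 - q ^ (2 * k + 2))) *
                (∏ k ∈ range (n + i), (1 - a ^ 2 * q ^ (2 * k + 2)))) := by
  have hq₁ : ∀ k, q ^ (k + 1) ≠ 1 := fun k => hq1 (k + 1) k.succ_pos
  have hP : ∀ N, ∏ k ∈ range N, (1 - q ^ (k + 1)) = qPochhammer q q N :=
    fun N => prod_congr rfl fun k _ => by ring
  have hA : ∀ N, ∏ k ∈ range N, (1 - a * q ^ (k + 1)) = qPochhammer (a * q) q N :=
    fun N => prod_congr rfl fun k _ => by ring
  have hN : ∀ N, ∏ k ∈ range N, (1 + a * q ^ k) = qPochhammer (-a) q N :=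
    fun N => prod_congr rfl fun k _ => by ring
  have hP₂ : ∀ N, ∏ k ∈ range N, (1 - q ^ (2 * k + 2)) = qPochhammer (q ^ 2) (q ^ 2) N :=
    fun N => prod_congr rfl fun k _ => by ring
  have hA₂ : ∀ N, ∏ k ∈ range N, (1 - a ^ 2 * q ^ (2 * k + 2)) =
      qPochhammer (a ^ 2 * q ^ 2) (q ^ 2) N :=
    fun N => prod_congr rfl fun k _ => by ring
  intro n
  simp only [hpair, hP, hA, hN, hP₂, hA₂, mul_sum]
  rw [sum_range_sum_range_succ_comm]
  refine sum_congr rfl fun i hi => ?_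
  obtain ⟨m, rfl⟩ := Nat.exists_eq_add_of_le (Nat.lt_succ_iff.1 (mem_range.1 hi))
  calc _ = (q ^ (i + m))⁻¹ / qPochhammer (-a) q (2 * (i + m)) *
        (∑ l ∈ range (m + 1), (-1) ^ (m - l) * q ^ ((m - l) ^ 2 - (m - l)) /
          qPochhammer (q ^ 2) (q ^ 2) (m - l) /
            (qPochhammer q q l * qPochhammer (a * q) q (2 * i + l))) * α i := by
        rw [mul_sum, sum_mul, show i + m + 1 - i = m + 1 by omega]
        refine sum_congr rfl fun l _ => ?_
        rw [Nat.add_sub_add_left, Nat.add_sub_cancel_left, show i + l + i = 2 * i + l by ring]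
        ring
    _ = _ := by
        rw [base_change_single hq0 hq₁ ha1 ha2, Nat.add_sub_cancel_left,
          show i + m + i = 2 * i + m by ring]
        ring
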